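/- The covariant derivative operators in holomorphic and anti-holomorphic directions satisfy the commutation relation of the pre-quantum connection: for every σ ∈ ℍ, all indices p, q ∈ {1,…,n}, and every smooth function f on E, [∇̂_{z_p}, ∇̂_{z̄_q}] f = (2πi ⟨b_p, b_q⟩ / (σ − σ̄)) · f, where ∇̂_{z_p} = (σ̄/(σ̄−σ)) D_{σ,p} and ∇̂_{z̄_q} = (σ/(σ−σ̄)) D_{σ̄,q}. -/

import Mathlib

open MeasureTheory Complex
open scoped Real RealInnerProductSpace BigOperators

noncomputable section

/-- `ℝⁿ` as a Euclidean space. -/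
abbrev EN (n : ℕ) := EuclideanSpace ℝ (Fin n)

/-- The first order operator `D f(θ) = df_θ[v] + 2πi c ⟨v,θ⟩ f(θ)`; with
`c = σ̄⁻¹` (resp. `c = σ⁻¹`) and `v = b_j` it is `D_{σ,j}` (resp. `D_{σ̄,j}`). -/
def Dop {n : ℕ} (c : ℂ) (v : EN n) (f : EN n → ℂ) : EN n → ℂ :=
  fun θ => fderiv ℝ f θ v + 2 * (π : ℂ) * I * c * (⟪v, θ⟫ : ℂ) * f θ

variable {n : ℕ}


lemma hasFDerivAt_inner' (w θ : EN n) :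
    HasFDerivAt (fun x : EN n => ((⟪w, x⟫ : ℝ) : ℂ))
      (Complex.ofRealCLM.comp (innerSL ℝ w)) θ :=
  Complex.ofRealCLM.hasFDerivAt.comp θ (innerSL ℝ w).hasFDerivAt

lemma Dop_Dop (c1 c2 a : ℂ) (v w : EN n) (f : EN n → ℂ) (hf : ContDiff ℝ (⊤ : ℕ∞) f) (θ : EN n) :
    Dop c1 v (fun x => a * Dop c2 w f x) θ =
      a * (fderiv ℝ (fderiv ℝ f) θ v w
        + 2*(π:ℂ)*I*c2 * ((⟪w,v⟫:ℂ) * f θ + (⟪w,θ⟫:ℂ) * fderiv ℝ f θ v)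
        + 2*(π:ℂ)*I*c1 * (⟪v,θ⟫:ℂ) * (fderiv ℝ f θ w + 2*(π:ℂ)*I*c2 * (⟪w,θ⟫:ℂ) * f θ)) := by
  have hf1 : Differentiable ℝ f := hf.differentiable (by simp)
  have hf' : Differentiable ℝ (fderiv ℝ f) :=
    (hf.fderiv_right (m := 1) (by exact WithTop.coe_le_coe.mpr le_top)).differentiable (by simp)
  have hG : HasFDerivAt (fun x => fderiv ℝ f x w)
      ((ContinuousLinearMap.apply ℝ ℂ w).comp (fderiv ℝ (fderiv ℝ f) θ)) θ :=
    (ContinuousLinearMap.apply ℝ ℂ w).hasFDerivAt.comp θ (hf' θ).hasFDerivAt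
  have hK : HasFDerivAt (fun x => 2*(π:ℂ)*I*c2 * ((⟪w,x⟫:ℝ):ℂ) * f x)
      ((2*(π:ℂ)*I*c2 * ((⟪w,θ⟫:ℝ):ℂ)) • fderiv ℝ f θ
        + (f θ) • ((2*(π:ℂ)*I*c2) • (Complex.ofRealCLM.comp (innerSL ℝ w)))) θ :=
    (((hasFDerivAt_inner' w θ).const_mul (2*(π:ℂ)*I*c2)).mul (hf1 θ).hasFDerivAt)
  have hsum := ((hG.add hK).const_mul a)
  rw [show (fun x => a * Dop c2 w f x)
      = fun x => a * ((fun x => fderiv ℝ f x w) x + (fun x => 2*(π:ℂ)*I*c2 * ((⟪w,x⟫:ℝ):ℂ) * f x) x) from rfl]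
  simp only [Dop]
  rw [HasFDerivAt.fderiv (f := fun x => a * ((fderiv ℝ f x) w + 2*(π:ℂ)*I*c2 * ((⟪w,x⟫:ℝ):ℂ) * f x)) hsum]
  simp only [ContinuousLinearMap.coe_smul', Pi.smul_apply, ContinuousLinearMap.add_apply,
    ContinuousLinearMap.comp_apply, ContinuousLinearMap.smul_apply,
    ContinuousLinearMap.apply_apply, Complex.ofRealCLM_apply, innerSL_apply_apply, smul_eq_mul]
  ring


lemma alg (s t A B C F Fp Fq S K : ℂ) (hs : s ≠ 0) (ht : t ≠ 0) (hst : s - t ≠ 0)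
    (hts : t - s ≠ 0) :
    (t / (t - s)) * (s / (s - t) * (S + K*s⁻¹*(C*F + B*Fp) + K*t⁻¹*A*(Fq + K*s⁻¹*B*F)))
      - (s / (s - t)) * (t / (t - s) * (S + K*t⁻¹*(C*F + A*Fq) + K*s⁻¹*B*(Fp + K*t⁻¹*A*F)))
      = K*C/(s-t)*F := by
  field_simp
  have hd1 : (t - s) * ((s - t) * (s * (t * s))) ≠ 0 := by
    exact mul_ne_zero hts (mul_ne_zero hst (mul_ne_zero hs (mul_ne_zero ht hs)))
  have hd2 : (s - t) * ((t - s) * (t * (s * t))) ≠ 0 := by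
    exact mul_ne_zero hst (mul_ne_zero hts (mul_ne_zero ht (mul_ne_zero hs ht)))
  ring

/-- for every `σ ∈ ℍ`, indices `p, q`, and every smooth `f`,
`[∇̂_{z_p}, ∇̂_{z̄_q}] f = (2πi⟨b_p,b_q⟩/(σ−σ̄)) f`, where
`∇̂_{z_p} = (σ̄/(σ̄−σ)) D_{σ,p}` and `∇̂_{z̄_q} = (σ/(σ−σ̄)) D_{σ̄,q}`. -/
theorem prequantum_commutation
    (n : ℕ) (b : Module.Basis (Fin n) ℝ (EN n)) (σ : ℂ) (hσ : 0 < σ.im)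
    (p q : Fin n) (f : EN n → ℂ) (hf : ContDiff ℝ (⊤ : ℕ∞) f) (θ : EN n) :
    (starRingEnd ℂ σ / (starRingEnd ℂ σ - σ)) *
        Dop (starRingEnd ℂ σ)⁻¹ (b p)
          (fun x => (σ / (σ - starRingEnd ℂ σ)) * Dop σ⁻¹ (b q) f x) θ -
      (σ / (σ - starRingEnd ℂ σ)) *
        Dop σ⁻¹ (b q)
          (fun x =>
            (starRingEnd ℂ σ / (starRingEnd ℂ σ - σ)) *
              Dop (starRingEnd ℂ σ)⁻¹ (b p) f x) θ =
      2 * (π : ℂ) * I * (⟪b p, b q⟫ : ℂ) / (σ - starRingEnd ℂ σ) * f θ := by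
  have hσ0 : σ ≠ 0 := fun h => by simp [h] at hσ
  have hcσ0 : starRingEnd ℂ σ ≠ 0 := by simpa using hσ0
  have hsub : σ - starRingEnd ℂ σ ≠ 0 := by
    intro h
    have : σ = starRingEnd ℂ σ := sub_eq_zero.mp h
    have : σ.im = -σ.im := by
      conv_lhs => rw [this]
      simp
    linarith
  have hsub' : starRingEnd ℂ σ - σ ≠ 0 := fun h => hsub (by
    have := neg_eq_zero.mpr h; rw [neg_sub] at this; exact this)
  have hf' : Differentiable ℝ (fderiv ℝ f) :=
    (hf.fderiv_right (m := 1) (by exact WithTop.coe_le_coe.mpr le_top)).differentiable (by simp)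
  have hsymm : fderiv ℝ (fderiv ℝ f) θ (b p) (b q) = fderiv ℝ (fderiv ℝ f) θ (b q) (b p) :=
    second_derivative_symmetric (f' := fderiv ℝ f)
      (fun x => ((hf.differentiable (by simp)) x).hasFDerivAt) ((hf' θ).hasFDerivAt) _ _
  rw [Dop_Dop _ _ _ _ _ f hf θ, Dop_Dop _ _ _ _ _ f hf θ, hsymm,
    real_inner_comm (b q) (b p)]
  have hts : starRingEnd ℂ σ - σ ≠ 0 := hsub'
  exact alg σ (starRingEnd ℂ σ) ((⟪b p,θ⟫:ℝ):ℂ) ((⟪b q,θ⟫:ℝ):ℂ) ((⟪b q,b p⟫:ℝ):ℂ) (f θ)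
    (fderiv ℝ f θ (b p)) (fderiv ℝ f θ (b q)) (fderiv ℝ (fderiv ℝ f) θ (b q) (b p))
    (2*(π:ℂ)*I) hσ0 hcσ0 hsub hts

end
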